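/- arXiv:2405.14469 — 4 statements merged into one kernel-verified Lean document; each statement's English description precedes it below -/
import Mathlib

section
/- The function φ(t) = (e^t − t − 1)/t² (extended by φ(0) = 1/2) satisfies φ(t) ≤ 1/(2−t) for all t with 0 ≤ t < 2. -/
/-- `φ(t) = (e^t − t − 1)/t²` (with `φ(0) = 1/2`) satisfies `φ(t) ≤ 1/(2−t)` for `0 ≤ t < 2`. -/
theorem stmt_1 (t : ℝ) (ht0 : 0 ≤ t) (ht2 : t < 2) :
    (if t = 0 then (1 : ℝ) / 2 else (Real.exp t - t - 1) / t ^ 2) ≤ 1 / (2 - t) := by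
  rcases ht0.eq_or_lt with rfl | htpos
  · norm_num
  have h2t : 0 < 2 - t := by linarith
  have hexp : (2 - t) * Real.exp t ≤ 2 + t := by
    rw [mul_comm, ← le_div_iff₀ h2t]
    exact Real.exp_le_two_add_div_two_sub ht0 ht2
  rw [if_neg htpos.ne', div_le_div_iff₀ (by positivity) h2t]
  linarith
end

section
/- If a real random variable X satisfies E[X] = 0 and X ≤ b almost surely for some b > 0, then E[e^X] ≤ exp(φ(b)·E[X²]), where φ(t) = (e^t − t − 1)/t². -/
/-!
Pointwise, `exp x ≤ 1 + x + φ(b) x²` for every `x ≤ b`: for `0 ≤ x ≤ b` this is the termwise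
comparison `x^(n+2) b² ≤ b^(n+2) x²` of the power series `φ(x) = ∑ xⁿ / (n+2)!`, and for `x ≤ 0`
it follows from `exp x ≤ 1 + x + x²/2` and `φ(b) ≥ 1/2`. Taking expectations and using
`E[X] = 0` gives `E[e^X] ≤ 1 + φ(b) E[X²] ≤ exp (φ(b) E[X²])`.
-/

open MeasureTheory Nat

namespace Real

lemma exp_le_one_add_add_sq_div_two_of_nonpos {x : ℝ} (hx : x ≤ 0) :
    exp x ≤ 1 + x + x ^ 2 / 2 := by
  have hderiv (y : ℝ) :
      HasDerivAt (fun y => 1 + y + y ^ 2 / 2 - exp y) (1 + y - exp y) y := by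
    refine ((((hasDerivAt_id' y).const_add 1).add
      ((hasDerivAt_pow 2 y).div_const 2)).sub (hasDerivAt_exp y)).congr_deriv ?_
    norm_num
  have hanti : Antitone (fun y => 1 + y + y ^ 2 / 2 - exp y) :=
    antitone_of_deriv_nonpos (fun y => (hderiv y).differentiableAt) fun y => by
      rw [(hderiv y).deriv]
      linarith [add_one_le_exp y]
  have := hanti hx
  simp only [exp_zero] at this
  linarith

lemma hasSum_exp_sub_one_sub (x : ℝ) :
    HasSum (fun n : ℕ => x ^ (n + 2) / (n + 2)!) (exp x - 1 - x) := by
  have h := (hasSum_nat_add_iff' 2).mpr (exp_eq_exp_ℝ ▸ NormedSpace.expSeries_div_hasSum_exp x)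
  simpa [Finset.sum_range_succ, sub_sub] using h

lemma sq_mul_exp_sub_one_sub_le {x b : ℝ} (hx : 0 ≤ x) (hxb : x ≤ b) :
    b ^ 2 * (exp x - 1 - x) ≤ x ^ 2 * (exp b - 1 - b) := by
  refine hasSum_le (fun n => ?_) ((hasSum_exp_sub_one_sub x).mul_left _)
    ((hasSum_exp_sub_one_sub b).mul_left _)
  rw [mul_div_assoc', mul_div_assoc']
  refine div_le_div_of_nonneg_right ?_ (by positivity)
  calc b ^ 2 * x ^ (n + 2) = x ^ n * (x ^ 2 * b ^ 2) := by ring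
    _ ≤ b ^ n * (x ^ 2 * b ^ 2) := by gcongr
    _ = x ^ 2 * b ^ (n + 2) := by ring

lemma exp_le_one_add_add_mul_sq {x b : ℝ} (hb : 0 < b) (hxb : x ≤ b) :
    exp x ≤ 1 + x + (exp b - b - 1) / b ^ 2 * x ^ 2 := by
  rcases le_or_gt x 0 with hx | hx
  · have hhalf : 1 / 2 ≤ (exp b - b - 1) / b ^ 2 := by
      rw [le_div_iff₀ (by positivity)]
      linarith [quadratic_le_exp_of_nonneg hb.le]
    nlinarith [exp_le_one_add_add_sq_div_two_of_nonpos hx, sq_nonneg x]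
  · rw [div_mul_eq_mul_div, ← sub_le_iff_le_add', le_div_iff₀ (by positivity)]
    linarith [sq_mul_exp_sub_one_sub_le hx.le hxb]

end Real

theorem stmt_2_general {Ω : Type*} [MeasurableSpace Ω] (P : Measure Ω) [IsProbabilityMeasure P]
    (X : Ω → ℝ) (b : ℝ) (hb : 0 < b)
    (hint : Integrable X P) (hmean : ∫ ω, X ω ∂P = 0)
    (hbd : ∀ᵐ ω ∂P, X ω ≤ b)
    (hsq : Integrable (fun ω => (X ω) ^ 2) P) :
    ∫ ω, Real.exp (X ω) ∂P
      ≤ Real.exp ((Real.exp b - b - 1) / b ^ 2 * ∫ ω, (X ω) ^ 2 ∂P) := by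
  set c := (Real.exp b - b - 1) / b ^ 2
  have hlin : Integrable (fun ω => 1 + X ω) P := (integrable_const 1).add hint
  have hquad : Integrable (fun ω => 1 + X ω + c * X ω ^ 2) P := hlin.add (hsq.const_mul c)
  calc ∫ ω, Real.exp (X ω) ∂P ≤ ∫ ω, (1 + X ω + c * X ω ^ 2) ∂P :=
        integral_mono_of_nonneg (.of_forall fun ω => (Real.exp_pos _).le) hquad
          (hbd.mono fun ω hω => Real.exp_le_one_add_add_mul_sq hb hω)
    _ = 1 + c * ∫ ω, X ω ^ 2 ∂P := by
        rw [integral_add hlin (hsq.const_mul c),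
          integral_add (integrable_const 1) hint, integral_const_mul, hmean]
        simp
    _ ≤ Real.exp (c * ∫ ω, X ω ^ 2 ∂P) := by
        linarith [Real.add_one_le_exp (c * ∫ ω, X ω ^ 2 ∂P)]

/-- If `E[X] = 0` and `X ≤ b` a.s. with `b > 0`, then
`E[e^X] ≤ exp(φ(b)·E[X²])` where `φ(t) = (e^t − t − 1)/t²`. -/
theorem stmt_2 {Ω : Type*} [MeasurableSpace Ω] (P : Measure Ω) [IsProbabilityMeasure P]
    (X : Ω → ℝ) (b : ℝ) (hb : 0 < b)
    (hint : Integrable X P) (hmean : ∫ ω, X ω ∂P = 0)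
    (hbd : ∀ᵐ ω ∂P, X ω ≤ b)
    (hexp : Integrable (fun ω => Real.exp (X ω)) P)
    (hsq : Integrable (fun ω => (X ω) ^ 2) P) :
    ∫ ω, Real.exp (X ω) ∂P
      ≤ Real.exp ((Real.exp b - b - 1) / b ^ 2 * ∫ ω, (X ω) ^ 2 ∂P) :=
  stmt_2_general P X b hb hint hmean hbd hsq
end

section
/- Let X₁,…,Xₙ be i.i.d. 𝒳-valued random variables and f : 𝒳ⁿ → ℝ measurable. If f has bounded differences with constant c, i.e., f(S_y^k x) − f(S_{y'}^k x) ≤ c for all k ∈ [n], y, y' ∈ 𝒳, x ∈ 𝒳ⁿ, then E[exp(f(X) − E[f(X')])] ≤ exp(n c² / 8). -/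
/-!
Integrating out the first coordinate turns `f` into `g x = ∫ f (y, x) dμ₀(y)`, which again has
bounded differences. For fixed `x` the slice `y ↦ f (y, x)` has mean `g x` and oscillation at
most `c₀`, so Hoeffding's lemma bounds its exponential moment by `exp (g x + c₀² / 8)`.
Fubini's theorem and induction on the number of coordinates multiply these factors.
-/

open MeasureTheory ProbabilityTheory Real Set

section

variable {α ι 𝒳 : Type*}

lemma exists_forall_mem_Icc_of_sub_le [Nonempty α] {φ : α → ℝ} {c : ℝ}
    (h : ∀ y y', φ y - φ y' ≤ c) : ∃ a, ∀ y, φ y ∈ Icc a (a + c) := by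
  obtain ⟨y₀⟩ := ‹Nonempty α›
  have hbdd : BddBelow (range φ) := ⟨φ y₀ - c, by rintro _ ⟨y, rfl⟩; linarith [h y₀ y]⟩
  refine ⟨⨅ y, φ y, fun y => ⟨ciInf_le hbdd y, ?_⟩⟩
  have : φ y - c ≤ ⨅ y', φ y' := le_ciInf fun y' => by linarith [h y y']
  linarith

lemma integral_exp_le_of_sub_le [MeasurableSpace α] {ν : Measure α} [IsProbabilityMeasure ν]
    {X : α → ℝ} (hX : AEMeasurable X ν) {c : ℝ} (h : ∀ y y', X y - X y' ≤ c) :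
    ∫ y, exp (X y) ∂ν ≤ exp (∫ y, X y ∂ν + c ^ 2 / 8) := by
  have := nonempty_of_isProbabilityMeasure ν
  obtain ⟨a, ha⟩ := exists_forall_mem_Icc_of_sub_le h
  have hoeffding := (hasSubgaussianMGF_of_mem_Icc hX (ae_of_all _ ha)).mgf_le 1
  simp only [mgf, one_mul, add_sub_cancel_left, exp_sub, integral_div] at hoeffding
  rw [div_le_iff₀ (exp_pos _), ← exp_add] at hoeffding
  refine hoeffding.trans_eq (congrArg exp ?_)
  push_cast
  rw [norm_eq_abs, div_pow, sq_abs]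
  ring

section FinCons

variable [MeasurableSpace 𝒳] {n : ℕ}

lemma measurable_finCons :
    Measurable fun w : 𝒳 × (Fin n → 𝒳) => (Fin.cons w.1 w.2 : Fin (n + 1) → 𝒳) :=
  measurable_pi_lambda _ fun i => Fin.cases measurable_fst
    (fun j => (measurable_pi_apply j).comp measurable_snd) i

lemma integral_pi_eq_integral_integral_finCons (μ : Fin (n + 1) → Measure 𝒳)
    [∀ i, SigmaFinite (μ i)] {G : (Fin (n + 1) → 𝒳) → ℝ} (hG : Integrable G (Measure.pi μ)) :
    ∫ z, G z ∂Measure.pi μ = ∫ x, ∫ y, G (Fin.cons y x) ∂μ 0 ∂Measure.pi fun i => μ i.succ := by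
  have he := (measurePreserving_piFinSuccAbove μ 0).symm
  rw [← he.integral_comp', integral_prod_symm]
  · simp [Fin.consEquiv]
  · exact (he.integrable_comp_emb (MeasurableEquiv.measurableEmbedding _)).2 hG

end FinCons

def HasBoundedDifferences [DecidableEq ι] (f : (ι → 𝒳) → ℝ) (c : ι → ℝ) : Prop :=
  ∀ i (y y' : 𝒳) x, f (Function.update x i y) - f (Function.update x i y') ≤ c i

namespace HasBoundedDifferences

section General

variable [DecidableEq ι] {f : (ι → 𝒳) → ℝ} {c : ι → ℝ}

lemma sub_le_sum [Fintype ι] (hf : HasBoundedDifferences f c) (x x' : ι → 𝒳) :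
    f x - f x' ≤ ∑ i, c i := by
  suffices ∀ s : Finset ι, f x - f (s.piecewise x' x) ≤ ∑ i ∈ s, c i by
    simpa using this Finset.univ
  intro s
  induction s using Finset.induction_on with
  | empty => simp
  | insert i s hi ih =>
    have hstep := hf i (x i) (x' i) (s.piecewise x' x)
    rw [Function.update_eq_self_iff.2 (s.piecewise_eq_of_notMem _ _ hi).symm] at hstep
    rw [Finset.piecewise_insert, Finset.sum_insert hi]
    linarith

lemma exists_forall_mem_Icc [Fintype ι] (hf : HasBoundedDifferences f c) :
    ∃ a b, ∀ x, f x ∈ Icc a b := by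
  cases isEmpty_or_nonempty (ι → 𝒳) with
  | inl _ => exact ⟨0, 0, isEmptyElim⟩
  | inr h =>
    obtain ⟨x₀⟩ := h
    exact ⟨f x₀ - ∑ i, c i, f x₀ + ∑ i, c i, fun x =>
      ⟨by linarith [hf.sub_le_sum x₀ x], by linarith [hf.sub_le_sum x x₀]⟩⟩

lemma integral [MeasurableSpace α] {ν : Measure α} [IsProbabilityMeasure ν]
    {F : α → (ι → 𝒳) → ℝ} (hF : ∀ y, HasBoundedDifferences (F y) c)
    (hint : ∀ x, Integrable (fun y => F y x) ν) :
    HasBoundedDifferences (fun x => ∫ y, F y x ∂ν) c := by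
  intro i z z' x
  rw [← integral_sub (hint _) (hint _)]
  calc _ ≤ ∫ _, c i ∂ν := integral_mono ((hint _).sub (hint _)) (integrable_const _)
          fun y => hF y i z z' x
    _ = c i := by simp

variable [MeasurableSpace 𝒳] [Fintype ι] {ν : Measure (ι → 𝒳)} [IsFiniteMeasure ν]

lemma integrable (hf : HasBoundedDifferences f c) (hmeas : Measurable f) : Integrable f ν := by
  obtain ⟨a, b, hab⟩ := hf.exists_forall_mem_Icc
  exact .of_mem_Icc a b hmeas.aemeasurable (ae_of_all _ hab)

lemma integrable_exp (hf : HasBoundedDifferences f c) (hmeas : Measurable f) :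
    Integrable (fun x => exp (f x)) ν := by
  obtain ⟨a, b, hab⟩ := hf.exists_forall_mem_Icc
  exact .of_mem_Icc (exp a) (exp b) hmeas.exp.aemeasurable
    (ae_of_all _ fun x => ⟨exp_le_exp.2 (hab x).1, exp_le_exp.2 (hab x).2⟩)

end General

section FinCons

variable {n : ℕ} {f : (Fin (n + 1) → 𝒳) → ℝ} {c : Fin (n + 1) → ℝ}

lemma sub_le_of_finCons (hf : HasBoundedDifferences f c) (x : Fin n → 𝒳) (y y' : 𝒳) :
    f (Fin.cons y x) - f (Fin.cons y' x) ≤ c 0 := by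
  simpa only [Fin.update_cons_zero] using hf 0 y y' (Fin.cons y' x)

lemma comp_finCons (hf : HasBoundedDifferences f c) (y : 𝒳) :
    HasBoundedDifferences (fun x => f (Fin.cons y x)) (fun i => c i.succ) := by
  intro i z z' x
  simpa only [Fin.cons_update] using hf i.succ z z' (Fin.cons y x)

end FinCons

theorem integral_exp_le [MeasurableSpace 𝒳] {n : ℕ} (μ : Fin n → Measure 𝒳)
    [∀ i, IsProbabilityMeasure (μ i)] {f : (Fin n → 𝒳) → ℝ} (hmeas : Measurable f)
    {c : Fin n → ℝ} (hf : HasBoundedDifferences f c) :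
    ∫ x, exp (f x) ∂Measure.pi μ ≤ exp (∫ x, f x ∂Measure.pi μ + ∑ i, c i ^ 2 / 8) := by
  induction n with
  | zero =>
    rw [show f = fun _ => f isEmptyElim from funext fun x => congrArg f (Subsingleton.elim _ _)]
    simp
  | succ n ih =>
    have hF : Measurable fun w : 𝒳 × (Fin n → 𝒳) => f (Fin.cons w.1 w.2) :=
      hmeas.comp measurable_finCons
    have hslice (x : Fin n → 𝒳) : Measurable fun y => f (Fin.cons y x) :=
      hF.comp (measurable_id.prodMk measurable_const)
    set g : (Fin n → 𝒳) → ℝ := fun x => ∫ y, f (Fin.cons y x) ∂μ 0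
    obtain ⟨a, b, hab⟩ := hf.exists_forall_mem_Icc
    have hg : HasBoundedDifferences g (fun i => c i.succ) :=
      .integral hf.comp_finCons fun x =>
        .of_mem_Icc a b (hslice x).aemeasurable (ae_of_all _ fun y => hab _)
    have hg_meas : Measurable g := hF.stronglyMeasurable.integral_prod_left'.measurable
    have hg_mean : ∫ x, g x ∂Measure.pi (fun i => μ i.succ) = ∫ x, f x ∂Measure.pi μ :=
      (integral_pi_eq_integral_integral_finCons μ (hf.integrable hmeas)).symm
    calc ∫ x, exp (f x) ∂Measure.pi μ
        = ∫ x, ∫ y, exp (f (Fin.cons y x)) ∂μ 0 ∂Measure.pi (fun i => μ i.succ) :=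
          integral_pi_eq_integral_integral_finCons μ (hf.integrable_exp hmeas)
      _ ≤ ∫ x, exp (g x) * exp (c 0 ^ 2 / 8) ∂Measure.pi (fun i => μ i.succ) := by
          refine integral_mono_of_nonneg
            (ae_of_all _ fun x => integral_nonneg fun y => exp_nonneg _)
            ((hg.integrable_exp hg_meas).mul_const _) (ae_of_all _ fun x => ?_)
          dsimp only
          rw [← exp_add]
          exact integral_exp_le_of_sub_le (hslice x).aemeasurable (hf.sub_le_of_finCons x)
      _ ≤ exp (∫ x, f x ∂Measure.pi μ + ∑ i, c i ^ 2 / 8) := by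
          rw [integral_mul_const, ← hg_mean, Fin.sum_univ_succ, add_left_comm, exp_add, mul_comm]
          gcongr
          exact ih _ hg_meas hg

end HasBoundedDifferences

end

theorem stmt_4_general {𝒳 : Type*} [MeasurableSpace 𝒳] (μ : Measure 𝒳) [IsProbabilityMeasure μ]
    (n : ℕ) (f : (Fin n → 𝒳) → ℝ) (hf : Measurable f) (c : ℝ)
    (hbd : ∀ (k : Fin n) (y y' : 𝒳) (x : Fin n → 𝒳),
      f (Function.update x k y) - f (Function.update x k y') ≤ c) :
    ∫ x, Real.exp (f x - ∫ x', f x' ∂(Measure.pi fun _ : Fin n => μ))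
        ∂(Measure.pi fun _ : Fin n => μ)
      ≤ Real.exp (n * c ^ 2 / 8) := by
  have hmgf := HasBoundedDifferences.integral_exp_le (fun _ => μ) hf (c := fun _ => c) hbd
  simp only [Finset.sum_const, Finset.card_univ, Fintype.card_fin, nsmul_eq_mul] at hmgf
  simp_rw [exp_sub, integral_div]
  rw [div_le_iff₀ (exp_pos _), ← exp_add]
  exact hmgf.trans_eq (congrArg exp (by ring))

/-- Bounded differences with constant `c` implies
`E[exp(f(X) − E[f(X')])] ≤ exp(n c² / 8)` for `X ~ μⁿ` i.i.d. -/
theorem stmt_4 {𝒳 : Type*} [MeasurableSpace 𝒳] (μ : Measure 𝒳) [IsProbabilityMeasure μ]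
    (n : ℕ) (f : (Fin n → 𝒳) → ℝ) (hf : Measurable f) (c : ℝ) (hc : 0 < c)
    (hbd : ∀ (k : Fin n) (y y' : 𝒳) (x : Fin n → 𝒳),
      f (Function.update x k y) - f (Function.update x k y') ≤ c) :
    ∫ x, Real.exp (f x - ∫ x', f x' ∂(Measure.pi fun _ : Fin n => μ))
        ∂(Measure.pi fun _ : Fin n => μ)
      ≤ Real.exp (n * c ^ 2 / 8) :=
  stmt_4_general μ n f hf c hbd
end

section
/- Let A : 𝒳ⁿ → ℝ^d have hypothesis sensitivity coefficient c_A = max_k sup_{x,y,y'} ‖A(S_y^k x) − A(S_{y'}^k x)‖, and set f(x) = ‖A(x) − E[A(X)]‖². Then f satisfies the self-bounded condition Σ_{k=1}^n (f(x) − inf_y f(S_y^k x))² ≤ 4n c_A² f(x) for all x ∈ 𝒳ⁿ. -/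
open MeasureTheory

/-- If `A : 𝒳ⁿ → ℝ^d` has hypothesis sensitivity coefficient `c_A` and
`f(x) = ‖A(x) − E[A(X)]‖²`, then `Σ_k (f(x) − inf_y f(S_y^k x))² ≤ 4n c_A² f(x)`. -/
theorem stmt_19 {𝒳 : Type*} [MeasurableSpace 𝒳] (μ : Measure 𝒳) [IsProbabilityMeasure μ]
    (n d : ℕ) (A : (Fin n → 𝒳) → EuclideanSpace ℝ (Fin d))
    (hA : Measurable A)
    (hAint : Integrable A (Measure.pi fun _ : Fin n => μ))
    (cA : ℝ)
    (hcA : ∀ (k : Fin n) (y y' : 𝒳) (x : Fin n → 𝒳),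
      ‖A (Function.update x k y) - A (Function.update x k y')‖ ≤ cA) :
    ∀ x : Fin n → 𝒳,
      ∑ k : Fin n,
        ((‖A x - ∫ x', A x' ∂(Measure.pi fun _ : Fin n => μ)‖ ^ 2)
          - ⨅ y : 𝒳, ‖A (Function.update x k y)
              - ∫ x', A x' ∂(Measure.pi fun _ : Fin n => μ)‖ ^ 2) ^ 2
      ≤ 4 * n * cA ^ 2 * ‖A x - ∫ x', A x' ∂(Measure.pi fun _ : Fin n => μ)‖ ^ 2 := by
  intro x
  set m := ∫ x', A x' ∂(Measure.pi fun _ : Fin n => μ) with hm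
  set a := ‖A x - m‖ with hadef
  have ha : 0 ≤ a := norm_nonneg _
  have key : ∀ k : Fin n,
      ((a ^ 2) - ⨅ y : 𝒳, ‖A (Function.update x k y) - m‖ ^ 2) ^ 2
        ≤ 4 * cA ^ 2 * a ^ 2 := by
    intro k
    haveI : Nonempty 𝒳 := ⟨x k⟩
    have hc : 0 ≤ cA := le_trans (norm_nonneg _) (hcA k (x k) (x k) x)
    have hbdd : BddBelow (Set.range fun y : 𝒳 => ‖A (Function.update x k y) - m‖ ^ 2) :=
      ⟨0, by rintro _ ⟨y, rfl⟩; positivity⟩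
    have hupper : (⨅ y : 𝒳, ‖A (Function.update x k y) - m‖ ^ 2) ≤ a ^ 2 := by
      have h := ciInf_le hbdd (x k)
      rwa [Function.update_eq_self] at h
    have hlower : a ^ 2 - 2 * cA * a ≤ ⨅ y : 𝒳, ‖A (Function.update x k y) - m‖ ^ 2 := by
      apply le_ciInf
      intro y
      set b := ‖A (Function.update x k y) - m‖ with hbdef
      have hb : 0 ≤ b := norm_nonneg _
      have hab : a - b ≤ cA := by
        have h1 : a - b ≤ ‖(A x - m) - (A (Function.update x k y) - m)‖ :=
          norm_sub_norm_le _ _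
        have h2 : (A x - m) - (A (Function.update x k y) - m)
            = A (Function.update x k (x k)) - A (Function.update x k y) := by
          rw [Function.update_eq_self]; abel
        calc a - b ≤ _ := h1
          _ = _ := by rw [h2]
          _ ≤ cA := hcA k (x k) y x
      nlinarith [sq_nonneg (a - b), mul_nonneg ha hb, mul_nonneg hc ha]
    nlinarith [mul_nonneg (mul_nonneg hc hc) (mul_nonneg ha ha)]
  calc ∑ k : Fin n, ((a ^ 2) - ⨅ y : 𝒳, ‖A (Function.update x k y) - m‖ ^ 2) ^ 2
      ≤ ∑ _k : Fin n, 4 * cA ^ 2 * a ^ 2 := Finset.sum_le_sum fun k _ => key k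
    _ = 4 * n * cA ^ 2 * a ^ 2 := by
        simp [Finset.sum_const, Finset.card_univ]; ring
end
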